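/- Suppose λ10 > 1 and λ20/λ10 + λ21·(1 − 1/λ10) > 1 + δ. Then the equilibrium p1 = (1 − 1/λ10, 0) attracts no points of Λ+: there is no solution u : [0,∞) → ℝ² of u' = F(u) with u(0) ∈ Λ+ and u(t) → (1 − 1/λ10, 0) as t → ∞. -/

import Mathlib

open Filter Topology Set

/-- Mean-field vector field of the generalized stacked contact process. -/
noncomputable def meanField (l10 l20 l21 δ : ℝ) (p : ℝ × ℝ) : ℝ × ℝ :=
  (l10 * p.1 * (1 - p.1 - p.2) - p.1 + δ * p.2 - l21 * p.1 * p.2,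
   l20 * p.2 * (1 - p.1 - p.2) - p.2 - δ * p.2 + l21 * p.1 * p.2)

/-- The feasible region Λ. -/
def lambdaRegion : Set (ℝ × ℝ) := {p | 0 ≤ p.1 ∧ 0 ≤ p.2 ∧ p.1 + p.2 ≤ 1}

/-- The region Λ₊ : if δ = 0 both coordinates positive, if δ > 0 only u₂ > 0. -/
def lambdaPlus (δ : ℝ) : Set (ℝ × ℝ) :=
  {p | p ∈ lambdaRegion ∧ 0 < p.2 ∧ (δ = 0 → 0 < p.1)}

/-- A solution of the mean-field ODE on [0,∞). -/
def IsSolution (l10 l20 l21 δ : ℝ) (u : ℝ → ℝ × ℝ) : Prop :=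
  ∀ t : ℝ, 0 ≤ t → HasDerivWithinAt u (meanField l10 l20 l21 δ (u t)) (Set.Ici 0) t

/-!
Along any solution the second coordinate obeys `u₂' = u₂ · r(u)`, with `r` the per-capita growth
rate of type 2. Hence `u₂` can never reach `0` from a positive value: on a compact time interval
`r` is bounded below by some `-K`, and `u₂` stays above `u₂(0) e^{-Kt}`. At `p₁` the invasion
condition says exactly `r(p₁) > 0`, so if `u → p₁` then eventually `r(u) > 0` and `u₂` is
nondecreasing from some time on, which is incompatible with `u₂ → 0`.
-/

def growthRate₂ (l20 l21 δ : ℝ) (p : ℝ × ℝ) : ℝ :=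
  l20 * (1 - p.1 - p.2) - 1 - δ + l21 * p.1

lemma continuous_growthRate₂ (l20 l21 δ : ℝ) : Continuous (growthRate₂ l20 l21 δ) := by
  unfold growthRate₂
  fun_prop

lemma meanField_snd (l10 l20 l21 δ : ℝ) (p : ℝ × ℝ) :
    (meanField l10 l20 l21 δ p).2 = p.2 * growthRate₂ l20 l21 δ p := by
  simp only [meanField, growthRate₂]
  ring

lemma growthRate₂_pos {l10 l20 l21 δ : ℝ} (h : l20 / l10 + l21 * (1 - 1 / l10) > 1 + δ) :
    0 < growthRate₂ l20 l21 δ (1 - 1 / l10, 0) := by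
  have : growthRate₂ l20 l21 δ (1 - 1 / l10, 0) = l20 / l10 + l21 * (1 - 1 / l10) - 1 - δ := by
    simp only [growthRate₂]
    ring
  linarith

theorem mul_exp_le_of_hasDerivWithinAt_mul {y g : ℝ → ℝ} {a b K : ℝ}
    (hy : ContinuousOn y (Icc a b))
    (hy' : ∀ x ∈ Ico a b, HasDerivWithinAt y (y x * g x) (Ici x) x)
    (hg : ∀ x ∈ Ico a b, -K < g x) (ha : 0 < y a) :
    ∀ x ∈ Icc a b, y a * Real.exp (-K * (x - a)) ≤ y x := by
  set B : ℝ → ℝ := fun x => -(y a * Real.exp (-K * (x - a)))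
  have hB : ∀ x, HasDerivAt B (K * (y a * Real.exp (-K * (x - a)))) x := fun x =>
    ((((hasDerivAt_id' x).sub_const a).const_mul (-K)).exp.const_mul (y a)).neg.congr_deriv
      (by ring)
  intro x hx
  have := image_le_of_deriv_right_lt_deriv_boundary hy.neg (fun x hx => (hy' x hx).neg)
    (by simp [B]) hB (fun x hx hyx => ?_) hx
  · simpa [B] using this
  · have hyx : y x = y a * Real.exp (-K * (x - a)) := neg_inj.mp hyx
    have : 0 < y a * Real.exp (-K * (x - a)) * (g x + K) := by
      have : 0 < g x + K := by linarith [hg x hx]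
      positivity
    rw [hyx]
    linarith

namespace IsSolution

variable {l10 l20 l21 δ : ℝ} {u : ℝ → ℝ × ℝ}

lemma continuousOn (hu : IsSolution l10 l20 l21 δ u) : ContinuousOn u (Ici 0) :=
  fun t ht => (hu t ht).continuousWithinAt

lemma hasDerivWithinAt_snd (hu : IsSolution l10 l20 l21 δ u) {t : ℝ} (ht : 0 ≤ t) :
    HasDerivWithinAt (fun s => (u s).2) ((u t).2 * growthRate₂ l20 l21 δ (u t)) (Ici t) t := by
  have := ((hu t ht).mono (Ici_subset_Ici.mpr ht)).hasFDerivWithinAt.snd.hasDerivWithinAt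
  simpa [meanField_snd] using this

lemma snd_mul_exp_le (hu : IsSolution l10 l20 l21 δ u) {a b K : ℝ} (ha : 0 ≤ a)
    (hg : ∀ x ∈ Ico a b, -K < growthRate₂ l20 l21 δ (u x)) (hua : 0 < (u a).2) :
    ∀ x ∈ Icc a b, (u a).2 * Real.exp (-K * (x - a)) ≤ (u x).2 :=
  mul_exp_le_of_hasDerivWithinAt_mul
    (continuous_snd.comp_continuousOn (hu.continuousOn.mono fun _ hx => ha.trans hx.1))
    (fun _ hx => hu.hasDerivWithinAt_snd (ha.trans hx.1)) hg hua

lemma snd_pos (hu : IsSolution l10 l20 l21 δ u) (hu0 : 0 < (u 0).2) {t : ℝ} (ht : 0 ≤ t) :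
    0 < (u t).2 := by
  obtain ⟨m, hm⟩ := isCompact_Icc.bddBelow_image
    ((continuous_growthRate₂ l20 l21 δ).comp_continuousOn
      (hu.continuousOn.mono (t := Icc 0 t) fun _ hx => hx.1))
  have hlow : ∀ x ∈ Ico 0 t, -(1 - m) < growthRate₂ l20 l21 δ (u x) := fun x hx => by
    have := hm (mem_image_of_mem _ (Ico_subset_Icc_self hx))
    simp only [Function.comp_apply] at this
    linarith
  have := hu.snd_mul_exp_le le_rfl hlow hu0 t ⟨ht, le_rfl⟩
  exact lt_of_lt_of_le (by positivity) this

lemma snd_le_of_growthRate₂_pos (hu : IsSolution l10 l20 l21 δ u) {a b : ℝ} (ha : 0 ≤ a)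
    (hab : a ≤ b) (hg : ∀ x ∈ Ico a b, 0 < growthRate₂ l20 l21 δ (u x)) (hua : 0 < (u a).2) :
    (u a).2 ≤ (u b).2 := by
  simpa using hu.snd_mul_exp_le ha (K := 0) (by simpa using hg) hua b ⟨hab, le_rfl⟩

end IsSolution

theorem p1_attracts_no_point_of_lambdaPlus_general
    (l10 l20 l21 δ : ℝ)
    (h2in1 : l20 / l10 + l21 * (1 - 1 / l10) > 1 + δ) :
    ¬ ∃ u : ℝ → ℝ × ℝ, IsSolution l10 l20 l21 δ u ∧ u 0 ∈ lambdaPlus δ ∧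
        Tendsto u atTop (𝓝 ((1 - 1 / l10, 0) : ℝ × ℝ)) := by
  rintro ⟨u, hu, hu0, hlim⟩
  have hgrowth : ∀ᶠ t in atTop, 0 < growthRate₂ l20 l21 δ (u t) :=
    ((continuous_growthRate₂ l20 l21 δ).tendsto _ |>.comp hlim).eventually
      (eventually_gt_nhds (growthRate₂_pos h2in1))
  obtain ⟨T, hT⟩ := eventually_atTop.mp (hgrowth.and (eventually_ge_atTop 0))
  have huT : 0 < (u T).2 := hu.snd_pos hu0.2.1 (hT T le_rfl).2
  have hdecay : ∀ᶠ t in atTop, (u t).2 < (u T).2 :=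
    ((continuous_snd.tendsto _).comp hlim).eventually (eventually_lt_nhds huT)
  obtain ⟨t, hlt, hTt⟩ := (hdecay.and (eventually_ge_atTop T)).exists
  exact hlt.not_ge <| hu.snd_le_of_growthRate₂_pos (hT T le_rfl).2 hTt
    (fun x hx => (hT x hx.1).1) huT

/-- If λ10 > 1 and the (2s invade 1s) inequality holds, the equilibrium
p₁ = (1 − 1/λ10, 0) attracts no points of Λ₊. -/
theorem p1_attracts_no_point_of_lambdaPlus
    (l10 l20 l21 δ : ℝ) (h10 : 0 ≤ l10) (h20 : 0 ≤ l20) (h21 : 0 ≤ l21) (hδ : 0 ≤ δ)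
    (h10gt : 1 < l10)
    (h2in1 : l20 / l10 + l21 * (1 - 1 / l10) > 1 + δ) :
    ¬ ∃ u : ℝ → ℝ × ℝ, IsSolution l10 l20 l21 δ u ∧ u 0 ∈ lambdaPlus δ ∧
        Tendsto u atTop (𝓝 ((1 - 1 / l10, 0) : ℝ × ℝ)) :=
  p1_attracts_no_point_of_lambdaPlus_general l10 l20 l21 δ h2in1
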